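/- For every m ∈ B_n°, the function ψ_{m,n} vanishes on the boundary of B_n: ψ_{m,n}(k) = 0 for all k ∈ ∂B_n. -/

import Mathlib

open Finset Real Complex

/-- The lattice `A₂ = {k ∈ ℤ³ : k₁+k₂+k₃ = 0}`. -/
def latA2 : Set (Fin 3 → ℤ) := {k | k 0 + k 1 + k 2 = 0}

/-- `B_n = {k ∈ A₂ : k₁ ≥ 0, k₂ ≥ 0, k₃ ≥ −n}`. -/
def Bn (n : ℕ) : Set (Fin 3 → ℤ) :=
  {k | k 0 + k 1 + k 2 = 0 ∧ 0 ≤ k 0 ∧ 0 ≤ k 1 ∧ -(n : ℤ) ≤ k 2}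

/-- The interior `B_n° = {k ∈ A₂ : k₁ ≥ 1, k₂ ≥ 1, k₃ ≥ 1−n}`. -/
def BnO (n : ℕ) : Set (Fin 3 → ℤ) :=
  {k | k 0 + k 1 + k 2 = 0 ∧ 1 ≤ k 0 ∧ 1 ≤ k 1 ∧ 1 - (n : ℤ) ≤ k 2}

/-- The function `ψ_{m,n}(k) = (1/(√6·n))·Σ_{σ∈S₃} sgn(σ)·exp(sgn(σ)·(2πi/(3n))·⟨m, σk⟩)`. -/
noncomputable def psi (n : ℕ) (m k : Fin 3 → ℤ) : ℂ :=
  (1 / (Real.sqrt 6 * n)) * ∑ σ : Equiv.Perm (Fin 3),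
    ((Equiv.Perm.sign σ : ℤ) : ℂ) *
      Complex.exp (((Equiv.Perm.sign σ : ℤ) : ℂ) * (2 * Real.pi * Complex.I / (3 * n)) *
        ((∑ i, m i * k (σ⁻¹ i) : ℤ) : ℂ))

/-- The eigenvalue `λ_{m,n}`. -/
noncomputable def lamEig (n : ℕ) (m : Fin 3 → ℤ) : ℝ :=
  (1 / 3) * (Real.cos (2 * Real.pi * ((m 0 - m 1 : ℤ) : ℝ) / (3 * n)) +
    Real.cos (2 * Real.pi * ((m 1 - m 2 : ℤ) : ℝ) / (3 * n)) +
    Real.cos (2 * Real.pi * ((m 2 - m 0 : ℤ) : ℝ) / (3 * n)))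

open Equiv

/-
Each face of `∂B_n` lies on a mirror of the affine Weyl group of `A₂` at level `3n`. If
`k 0 = 0`, `k 1 = 0` or `k 2 = -n`, let `τ` swap the other two coordinates; then `k + k ∘ τ` is
`0`, `0` or `n • (1, 1, -2)`, and since `∑ m = 0` this gives
`⟨m, σk⟩ + ⟨m, στk⟩ ≡ 0 (mod 3n)` for every `σ`. So the exponential factor of `ψ_{m,n}` is
invariant under `σ ↦ στ` while the sign flips, and the alternating sum over `S₃` cancels in pairs.
-/

theorem Equiv.Perm.sum_sign_mul_eq_zero_of_mul_swap {α R : Type*} [Fintype α] [DecidableEq α]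
    [Ring R] (f : Perm α → R) {a b : α} (hab : a ≠ b) (hf : ∀ σ, f (σ * swap a b) = f σ) :
    ∑ σ : Perm α, ((Perm.sign σ : ℤ) : R) * f σ = 0 := by
  refine sum_ninvolution (fun σ => σ * swap a b) (fun σ => ?_) (fun σ _ h => ?_)
    (fun _ => mem_univ _) (fun σ => by simp [mul_assoc])
  · simp [Perm.sign_mul, Perm.sign_swap hab, hf]
  · exact hab (swap_eq_one_iff.mp (mul_left_cancel (h.trans (mul_one σ).symm)))

lemma sum_mul_comp_perm_inv {α : Type*} [Fintype α] (m k : α → ℤ) (σ : Perm α) :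
    ∑ i, m i * k (σ⁻¹ i) = ∑ j, m (σ j) * k j :=
  (Equiv.sum_comp σ fun i => m i * k (σ⁻¹ i)).symm.trans (by simp)

lemma Complex.exp_neg_mul_eq_of_dvd_add {q s t : ℤ} (e : ℤ) (h : q ∣ s + t) :
    exp (-e * (2 * π * I / q) * t) = exp (e * (2 * π * I / q) * s) := by
  obtain ⟨j, hj⟩ := h
  have ht : (t : ℂ) = q * j - s := by rw [eq_sub_iff_add_eq, add_comm]; exact_mod_cast hj
  rcases eq_or_ne q 0 with rfl | hq
  · simp -- `2 * π * I / 0 = 0`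
  have hq' : (q : ℂ) ≠ 0 := by exact_mod_cast hq
  calc exp (-e * (2 * π * I / q) * t)
      = exp (e * (2 * π * I / q) * s + (-(e * j) : ℤ) * (2 * π * I)) := by
        rw [ht]; congr 1; push_cast; field_simp; ring
    _ = exp (e * (2 * π * I / q) * s) := by rw [exp_add, exp_int_mul_two_pi_mul_I, mul_one]

lemma eq_zero_or_eq_neg_of_mem_Bn_diff_BnO {n : ℕ} {k : Fin 3 → ℤ} (hk : k ∈ Bn n \ BnO n) :
    k 0 = 0 ∨ k 1 = 0 ∨ k 2 = -n := by
  obtain ⟨⟨hsum, h0, h1, h2⟩, hk⟩ := hk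
  by_contra! h
  exact hk ⟨hsum, by omega, by omega, by omega⟩

lemma exists_swap_dvd_of_mem_Bn_diff_BnO {n : ℕ} {m k : Fin 3 → ℤ} (hm : m ∈ latA2)
    (hk : k ∈ Bn n \ BnO n) :
    ∃ a b : Fin 3, a ≠ b ∧
      ∀ σ : Perm (Fin 3), (3 * n : ℤ) ∣ ∑ j, m (σ j) * k j + ∑ j, m ((σ * swap a b) j) * k j := by
  have hk0 : k 0 + k 1 + k 2 = 0 := hk.1.1
  have hmσ (σ : Perm (Fin 3)) : m (σ 0) + m (σ 1) + m (σ 2) = 0 := by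
    have h := Equiv.sum_comp σ m
    rwa [Fin.sum_univ_three, Fin.sum_univ_three, hm] at h
  rcases eq_zero_or_eq_neg_of_mem_Bn_diff_BnO hk with h | h | h
  · refine ⟨1, 2, by decide, fun σ => ⟨0, ?_⟩⟩
    simp only [Fin.sum_univ_three, Perm.coe_mul, Function.comp_apply, swap_apply_left,
      swap_apply_right, swap_apply_of_ne_of_ne, ne_eq, Fin.reduceEq, not_false_eq_true]
    linear_combination (2 * m (σ 0)) * h + (m (σ 1) + m (σ 2)) * (hk0 - h)
  · refine ⟨0, 2, by decide, fun σ => ⟨0, ?_⟩⟩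
    simp only [Fin.sum_univ_three, Perm.coe_mul, Function.comp_apply, swap_apply_left,
      swap_apply_right, swap_apply_of_ne_of_ne, ne_eq, Fin.reduceEq, not_false_eq_true]
    linear_combination (2 * m (σ 1)) * h + (m (σ 0) + m (σ 2)) * (hk0 - h)
  · refine ⟨0, 1, by decide, fun σ => ⟨-m (σ 2), ?_⟩⟩
    simp only [Fin.sum_univ_three, Perm.coe_mul, Function.comp_apply, swap_apply_left,
      swap_apply_right, swap_apply_of_ne_of_ne, ne_eq, Fin.reduceEq, not_false_eq_true]
    linear_combination (k 0 + k 1) * hmσ σ + (3 * m (σ 2)) * h - m (σ 2) * hk0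

theorem psi_vanishes_on_boundary (n : ℕ) (m : Fin 3 → ℤ) (hm : m ∈ BnO n) :
    ∀ k ∈ Bn n \ BnO n, psi n m k = 0 := by
  intro k hk
  obtain ⟨a, b, hab, hdvd⟩ := exists_swap_dvd_of_mem_Bn_diff_BnO hm.1 hk
  rw [psi, Perm.sum_sign_mul_eq_zero_of_mul_swap _ hab fun σ => ?_, mul_zero]
  rw [Perm.sign_mul, Perm.sign_swap hab, sum_mul_comp_perm_inv, sum_mul_comp_perm_inv]
  simpa using exp_neg_mul_eq_of_dvd_add (Perm.sign σ : ℤ) (hdvd σ)
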